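/- Let V ⊂ P^7 be the cone over the sextic Del Pezzo surface S_6 ⊂ P^6 = {y = 0} with vertex v = [0:...:0:1], and t the involution [x_0:...:x_6:y] ↦ [x_2:x_4:x_0:x_5:x_1:x_3:x_6:-y]. Then the fixed locus of t|_V consists of exactly five points: v and the four points [±1:±1:±1:±1:±1:±1:1:0] given by v_1=[1:1:1:1:1:1:1:0], v_2=[1:-1:1:-1:-1:-1:1:0], v_3=[-1:1:-1:-1:1:-1:1:0], v_4=[-1:-1:-1:1:-1:1:1:0]. -/

import Mathlib

/-- The involution `t : [x₀:…:x₆:y] ↦ [x₂:x₄:x₀:x₅:x₁:x₃:x₆:-y]` of ℙ⁷. -/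
def tmap (x : Fin 8 → ℂ) : Fin 8 → ℂ :=
  ![x 2, x 4, x 0, x 5, x 1, x 3, x 6, -(x 7)]

/-- The cone `V ⊂ ℙ⁷` over the sextic Del Pezzo surface, cut out by nine quadrics. -/
def onV (x : Fin 8 → ℂ) : Prop :=
  x 3 * x 5 = x 6 ^ 2 ∧ x 2 * x 5 = x 4 * x 6 ∧ x 1 * x 5 = x 0 * x 6 ∧
  x 3 * x 4 = x 2 * x 6 ∧ x 1 * x 4 = x 6 ^ 2 ∧ x 0 * x 4 = x 5 * x 6 ∧
  x 0 * x 3 = x 1 * x 6 ∧ x 1 * x 2 = x 3 * x 6 ∧ x 0 * x 2 = x 6 ^ 2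

def vtx : Fin 8 → ℂ := ![0, 0, 0, 0, 0, 0, 0, 1]
def v1 : Fin 8 → ℂ := ![1, 1, 1, 1, 1, 1, 1, 0]
def v2 : Fin 8 → ℂ := ![1, -1, 1, -1, -1, -1, 1, 0]
def v3 : Fin 8 → ℂ := ![-1, 1, -1, -1, 1, -1, 1, 0]
def v4 : Fin 8 → ℂ := ![-1, -1, -1, 1, -1, 1, 1, 0]

/-!
Since `t` is linear, fixes `x₆` and negates `y`, an eigenvector `x` of `t` on `V` either has
`x₆ = 0`, and then the quadrics `x₀x₂ = x₁x₄ = x₃x₅ = x₆²` together with `x₂ = c x₀`,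
`x₄ = c x₁`, `x₅ = c x₃` kill `x₀, …, x₅`, leaving the vertex; or it has eigenvalue `1`,
so `y = 0`, `x₂ = x₀`, `x₄ = x₁`, `x₅ = x₃`, and the remaining equations
`x₀² = x₁² = x₆²`, `x₃x₆ = x₀x₁` leave exactly the four sign choices `v₁, …, v₄`.
-/

def signPoint (a b : ℂ) : Fin 8 → ℂ := ![a, b, a, a * b, b, a * b, 1, 0]

lemma v1_eq_signPoint : v1 = signPoint 1 1 := by
  ext i; fin_cases i <;> simp [v1, signPoint]

lemma v2_eq_signPoint : v2 = signPoint 1 (-1) := by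
  ext i; fin_cases i <;> simp [v2, signPoint]

lemma v3_eq_signPoint : v3 = signPoint (-1) 1 := by
  ext i; fin_cases i <;> simp [v3, signPoint]

lemma v4_eq_signPoint : v4 = signPoint (-1) (-1) := by
  ext i; fin_cases i <;> simp [v4, signPoint]

lemma signPoint_eq_of_sq_eq_one {a b : ℂ} (ha : a ^ 2 = 1) (hb : b ^ 2 = 1) :
    signPoint a b = v1 ∨ signPoint a b = v2 ∨ signPoint a b = v3 ∨ signPoint a b = v4 := by
  rw [v1_eq_signPoint, v2_eq_signPoint, v3_eq_signPoint, v4_eq_signPoint]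
  rcases sq_eq_one_iff.mp ha with rfl | rfl <;> rcases sq_eq_one_iff.mp hb with rfl | rfl <;>
    simp

lemma tmap_smul (c : ℂ) (x : Fin 8 → ℂ) : tmap (c • x) = c • tmap x := by
  ext i; fin_cases i <;> simp [tmap]

lemma tmap_vtx : tmap vtx = (-1 : ℂ) • vtx := by
  ext i; fin_cases i <;> simp [tmap, vtx]

lemma tmap_signPoint (a b : ℂ) : tmap (signPoint a b) = signPoint a b := by
  ext i; fin_cases i <;> simp [tmap, signPoint]

lemma coords_of_tmap_eq_smul {x : Fin 8 → ℂ} {c : ℂ} (ht : tmap x = c • x) :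
    x 2 = c * x 0 ∧ x 4 = c * x 1 ∧ x 5 = c * x 3 ∧ x 6 = c * x 6 ∧ -x 7 = c * x 7 :=
  ⟨by simpa [tmap] using congrFun ht 0, by simpa [tmap] using congrFun ht 1,
    by simpa [tmap] using congrFun ht 3, by simpa [tmap] using congrFun ht 6,
    by simpa [tmap] using congrFun ht 7⟩

lemma eq_smul_vtx_of_tmap_eq_smul {x : Fin 8 → ℂ} {c : ℂ} (hV : onV x) (hc : c ≠ 0)
    (ht : tmap x = c • x) (h6 : x 6 = 0) : x = x 7 • vtx := by
  obtain ⟨q1, -, -, -, q5, -, -, -, q9⟩ := hV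
  obtain ⟨e0, e1, e3, -, -⟩ := coords_of_tmap_eq_smul ht
  have h0 : c * x 0 ^ 2 = 0 := by linear_combination q9 - x 0 * e0 + h6 * x 6
  have h1 : c * x 1 ^ 2 = 0 := by linear_combination q5 - x 1 * e1 + h6 * x 6
  have h3 : c * x 3 ^ 2 = 0 := by linear_combination q1 - x 3 * e3 + h6 * x 6
  simp only [mul_eq_zero, hc, false_or, pow_eq_zero_iff two_ne_zero] at h0 h1 h3
  ext i; fin_cases i <;> simp [vtx, e0, e1, e3, h0, h1, h3, h6]

lemma exists_eq_smul_signPoint_of_tmap_eq_smul {x : Fin 8 → ℂ} {c : ℂ} (hV : onV x)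
    (ht : tmap x = c • x) (h6 : x 6 ≠ 0) :
    ∃ a b : ℂ, a ^ 2 = 1 ∧ b ^ 2 = 1 ∧ x = x 6 • signPoint a b := by
  obtain ⟨-, -, -, -, q5, -, -, q8, q9⟩ := hV
  obtain ⟨e0, e1, e3, e6, e7⟩ := coords_of_tmap_eq_smul ht
  obtain rfl : c = 1 := (mul_eq_right₀ h6).mp e6.symm
  rw [one_mul] at e0 e1 e3 e7
  have h3 : x 3 * x 6 = x 0 * x 1 := by linear_combination x 1 * e0 - q8
  refine ⟨x 0 / x 6, x 1 / x 6, ?_, ?_, ?_⟩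
  · rw [div_pow, div_eq_one_iff_eq (pow_ne_zero 2 h6)]
    linear_combination q9 - x 0 * e0
  · rw [div_pow, div_eq_one_iff_eq (pow_ne_zero 2 h6)]
    linear_combination q5 - x 1 * e1
  · have h7 : x 7 = 0 := CharZero.neg_eq_self_iff.mp e7
    have h3' : x 3 = x 6 * (x 0 / x 6 * (x 1 / x 6)) := by field_simp; linear_combination h3
    ext i
    fin_cases i <;> simp [signPoint, e0, e1, e3, h3', h7, mul_div_cancel₀ _ h6]

/-- The fixed locus of `t|_V` consists of exactly the five points
`v, v₁, v₂, v₃, v₄` of ℙ⁷ (in homogeneous coordinates: a nonzero point of `V`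
is fixed iff it is a nonzero scalar multiple of one of them). -/
theorem stmt15 (x : Fin 8 → ℂ) (hx : x ≠ 0) (hV : onV x) :
    (∃ c : ℂ, c ≠ 0 ∧ tmap x = c • x) ↔
      ∃ d : ℂ, d ≠ 0 ∧
        (x = d • vtx ∨ x = d • v1 ∨ x = d • v2 ∨ x = d • v3 ∨ x = d • v4) := by
  constructor
  · rintro ⟨c, hc, ht⟩
    by_cases h6 : x 6 = 0
    · have hvtx := eq_smul_vtx_of_tmap_eq_smul hV hc ht h6
      refine ⟨x 7, fun h7 => hx ?_, Or.inl hvtx⟩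
      rw [hvtx, h7, zero_smul]
    · obtain ⟨a, b, ha, hb, hab⟩ := exists_eq_smul_signPoint_of_tmap_eq_smul hV ht h6
      refine ⟨x 6, h6, Or.inr ?_⟩
      rcases signPoint_eq_of_sq_eq_one ha hb with h | h | h | h <;> rw [h] at hab <;> tauto
  · rintro ⟨d, -, rfl | rfl | rfl | rfl | rfl⟩
    · exact ⟨-1, by norm_num, by rw [tmap_smul, tmap_vtx, smul_comm]⟩
    · exact ⟨1, one_ne_zero, by rw [v1_eq_signPoint, tmap_smul, tmap_signPoint, one_smul]⟩
    · exact ⟨1, one_ne_zero, by rw [v2_eq_signPoint, tmap_smul, tmap_signPoint, one_smul]⟩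
    · exact ⟨1, one_ne_zero, by rw [v3_eq_signPoint, tmap_smul, tmap_signPoint, one_smul]⟩
    · exact ⟨1, one_ne_zero, by rw [v4_eq_signPoint, tmap_smul, tmap_signPoint, one_smul]⟩
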